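/- Bellman equation for belief values: for every belief b that is neither a Bad-belief nor a belief from which Bad-beliefs are unreachable, V(b) = max_{α ∈ Act(O(b))} Σ_{b'} P^B(b,α,b') · V(b'); furthermore V(b) = 0 when Bad-beliefs are unreachable from b, and V(b) = 1 for Bad-beliefs b. -/
import Mathlib


open BigOperators
open scoped Classical

/-- A POMDP: an MDP with finite state, action and observation spaces,
    a transition function `P` with `∑ s', P s a s' ∈ {0,1}`,
    an observation function `O` and an initial state. -/
structure POMDP (S A Z : Type) [Fintype S] [Fintype A] [Fintype Z] where
  P : S → A → S → ℝ
  P_nonneg : ∀ s a s', 0 ≤ P s a s'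
  P_sum : ∀ s a, (∑ s', P s a s') = 0 ∨ (∑ s', P s a s') = 1
  O : S → Z
  init : S

variable {S A Z : Type} [Fintype S] [Fintype A] [Fintype Z]

/-- A probability distribution over the (finite) state space. -/
def IsDist (b : S → ℝ) : Prop := (∀ s, 0 ≤ b s) ∧ ∑ s, b s = 1

/-- A belief: a distribution whose support is contained in one observation class. -/
def IsBelief (M : POMDP S A Z) (b : S → ℝ) : Prop :=
  IsDist b ∧ ∀ s s', b s ≠ 0 → b s' ≠ 0 → M.O s = M.O s'

/-- The Dirac distribution on a state. -/
noncomputable def dirac (s : S) : S → ℝ := fun t => if t = s then 1 else 0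

/-- `P(b,α,z)`: the probability of observing `z` after taking `α` in belief `b`. -/
noncomputable def obsProb (M : POMDP S A Z) (b : S → ℝ) (a : A) (z : Z) : ℝ :=
  ∑ s, b s * ∑ s', (if M.O s' = z then M.P s a s' else 0)

/-- `⟦b|α,z⟧`: the Bayesian belief update after taking `α` and observing `z`. -/
noncomputable def beliefUpdate (M : POMDP S A Z) (b : S → ℝ) (a : A) (z : Z) : S → ℝ :=
  fun s' => (if M.O s' = z then ∑ s, b s * M.P s a s' else 0) / obsProb M b a z

/-- Bad beliefs: beliefs assigning total probability 1 to the bad states. -/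
def IsBadBelief (Bad : Finset S) (b : S → ℝ) : Prop := ∑ s ∈ Bad, b s = 1

/-- Transition probabilities of the belief MDP. -/
noncomputable def beliefTrans (M : POMDP S A Z) (b : S → ℝ) (a : A) (b' : S → ℝ) : ℝ :=
  ∑ z, if b' = beliefUpdate M b a z ∧ 0 < obsProb M b a z then obsProb M b a z else 0

/-- `n`-step value iteration for reaching the bad beliefs in the belief MDP. -/
noncomputable def valN (M : POMDP S A Z) (Bad : Finset S) : ℕ → (S → ℝ) → ℝ
  | 0, b => if IsBadBelief Bad b then 1 else 0
  | n+1, b =>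
      if IsBadBelief Bad b then 1
      else ⨆ a : A, ∑ z, obsProb M b a z * valN M Bad n (beliefUpdate M b a z)

/-- The value of a belief: the optimal probability of reaching the bad beliefs
    in the belief MDP (limit of value iteration). -/
noncomputable def beliefVal (M : POMDP S A Z) (Bad : Finset S) (b : S → ℝ) : ℝ :=
  ⨆ n, valN M Bad n b

section BellmanAux

variable {S A Z : Type} [Fintype S] [Fintype A] [Fintype Z]

def SubDist (b : S → ℝ) : Prop := (∀ s, 0 ≤ b s) ∧ ∑ s, b s ≤ 1

lemma obsProb_nonneg (M : POMDP S A Z) {b : S → ℝ} (hb : ∀ s, 0 ≤ b s) (a : A) (z : Z) :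
    0 ≤ obsProb M b a z := by
  refine Finset.sum_nonneg fun s _ => mul_nonneg (hb s) (Finset.sum_nonneg fun s' _ => ?_)
  split_ifs with h
  · exact M.P_nonneg s a s'
  · exact le_refl 0

lemma sum_obsProb (M : POMDP S A Z) (b : S → ℝ) (a : A) :
    ∑ z, obsProb M b a z = ∑ s, b s * ∑ s', M.P s a s' := by
  unfold obsProb
  rw [Finset.sum_comm]
  refine Finset.sum_congr rfl fun s _ => ?_
  rw [← Finset.mul_sum, Finset.sum_comm]
  congr 1
  refine Finset.sum_congr rfl fun s' _ => ?_
  rw [Finset.sum_ite_eq]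
  simp

lemma sum_obsProb_le_one (M : POMDP S A Z) {b : S → ℝ} (hb : SubDist b) (a : A) :
    ∑ z, obsProb M b a z ≤ 1 := by
  rw [sum_obsProb]
  calc ∑ s, b s * ∑ s', M.P s a s' ≤ ∑ s, b s := by
        refine Finset.sum_le_sum fun s _ => ?_
        rcases M.P_sum s a with h | h
        · rw [h, mul_zero]; exact hb.1 s
        · rw [h, mul_one]
    _ ≤ 1 := hb.2

lemma obsProb_eq (M : POMDP S A Z) (b : S → ℝ) (a : A) (z : Z) :
    obsProb M b a z = ∑ s', if M.O s' = z then ∑ s, b s * M.P s a s' else 0 := by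
  unfold obsProb
  simp only [Finset.mul_sum, mul_ite, mul_zero]
  rw [Finset.sum_comm]
  refine Finset.sum_congr rfl fun s' _ => ?_
  by_cases h : M.O s' = z <;> simp [h]

lemma subDist_update (M : POMDP S A Z) {b : S → ℝ} (hb : SubDist b) (a : A) (z : Z) :
    SubDist (beliefUpdate M b a z) := by
  constructor
  · intro s'
    unfold beliefUpdate
    refine div_nonneg ?_ (obsProb_nonneg M hb.1 a z)
    split_ifs with h
    · exact Finset.sum_nonneg fun s _ => mul_nonneg (hb.1 s) (M.P_nonneg s a s')
    · exact le_refl 0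
  · unfold beliefUpdate
    rw [← Finset.sum_div, ← obsProb_eq]
    exact div_self_le_one _

lemma valN_le_one (M : POMDP S A Z) (Bad : Finset S) [Nonempty A] :
    ∀ (n : ℕ) (b : S → ℝ), SubDist b → valN M Bad n b ≤ 1 := by
  intro n
  induction n with
  | zero => intro b _; simp only [valN]; split_ifs <;> norm_num
  | succ n ih =>
    intro b hb
    simp only [valN]
    split_ifs with h
    · exact le_refl 1
    · refine ciSup_le fun a => ?_
      calc ∑ z, obsProb M b a z * valN M Bad n (beliefUpdate M b a z)
          ≤ ∑ z, obsProb M b a z := by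
            refine Finset.sum_le_sum fun z _ => ?_
            calc obsProb M b a z * valN M Bad n (beliefUpdate M b a z)
                ≤ obsProb M b a z * 1 :=
                  mul_le_mul_of_nonneg_left (ih _ (subDist_update M hb a z))
                    (obsProb_nonneg M hb.1 a z)
              _ = obsProb M b a z := mul_one _
        _ ≤ 1 := sum_obsProb_le_one M hb a

lemma valN_nonneg (M : POMDP S A Z) (Bad : Finset S) [Nonempty A] :
    ∀ (n : ℕ) (b : S → ℝ), SubDist b → 0 ≤ valN M Bad n b := by
  intro n
  induction n with
  | zero => intro b _; simp only [valN]; split_ifs <;> norm_num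
  | succ n ih =>
    intro b hb
    simp only [valN]
    split_ifs with h
    · norm_num
    · obtain ⟨a⟩ := ‹Nonempty A›
      refine le_trans ?_ (le_ciSup (Set.Finite.bddAbove (Set.finite_range _)) a)
      exact Finset.sum_nonneg fun z _ => mul_nonneg (obsProb_nonneg M hb.1 a z)
        (ih _ (subDist_update M hb a z))

lemma valN_mono_succ (M : POMDP S A Z) (Bad : Finset S) [Nonempty A] :
    ∀ (n : ℕ) (b : S → ℝ), SubDist b → valN M Bad n b ≤ valN M Bad (n + 1) b := by
  intro n
  induction n with
  | zero =>
    intro b hb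
    simp only [valN]
    split_ifs with h
    · exact le_refl 1
    · obtain ⟨a⟩ := ‹Nonempty A›
      refine le_trans ?_ (le_ciSup (Set.Finite.bddAbove (Set.finite_range _)) a)
      exact Finset.sum_nonneg fun z _ => mul_nonneg (obsProb_nonneg M hb.1 a z)
        (valN_nonneg M Bad 0 _ (subDist_update M hb a z))
  | succ n ih =>
    intro b hb
    simp only [valN]
    split_ifs with h
    · exact le_refl 1
    · refine ciSup_le fun a => ?_
      refine le_trans ?_ (le_ciSup (Set.Finite.bddAbove (Set.finite_range _)) a)
      refine Finset.sum_le_sum fun z _ => ?_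
      exact mul_le_mul_of_nonneg_left (ih _ (subDist_update M hb a z))
        (obsProb_nonneg M hb.1 a z)

lemma valN_monotone (M : POMDP S A Z) (Bad : Finset S) [Nonempty A]
    {b : S → ℝ} (hb : SubDist b) : Monotone (fun n => valN M Bad n b) :=
  monotone_nat_of_le_succ fun n => valN_mono_succ M Bad n b hb

lemma valN_bddAbove (M : POMDP S A Z) (Bad : Finset S) [Nonempty A]
    {b : S → ℝ} (hb : SubDist b) :
    BddAbove (Set.range (fun n => valN M Bad n b)) := by
  refine ⟨1, ?_⟩
  rintro x ⟨n, rfl⟩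
  exact valN_le_one M Bad n b hb

end BellmanAux

section BellmanAux2

variable {S A Z : Type} [Fintype S] [Fintype A] [Fintype Z]

lemma unreach_update (M : POMDP S A Z) (Bad : Finset S)
    {b : S → ℝ} (a : A) (z : Z) (hz : 0 < obsProb M b a z)
    (h : ¬ ∃ b', Relation.ReflTransGen (fun x y => ∃ a, 0 < beliefTrans M x a y) b b'
        ∧ IsBadBelief Bad b') :
    ¬ ∃ b', Relation.ReflTransGen (fun x y => ∃ a, 0 < beliefTrans M x a y)
        (beliefUpdate M b a z) b' ∧ IsBadBelief Bad b' := by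
  rintro ⟨b', hr, hbad⟩
  refine h ⟨b', Relation.ReflTransGen.head ⟨a, ?_⟩ hr, hbad⟩
  unfold beliefTrans
  refine Finset.sum_pos' (fun z' _ => ?_) ⟨z, Finset.mem_univ z, ?_⟩
  · split_ifs with h'
    · exact le_of_lt h'.2
    · exact le_refl 0
  · rw [if_pos ⟨rfl, hz⟩]; exact hz

lemma valN_unreach (M : POMDP S A Z) (Bad : Finset S) [Nonempty A] :
    ∀ (n : ℕ) (b : S → ℝ), SubDist b →
      (¬ ∃ b', Relation.ReflTransGen (fun x y => ∃ a, 0 < beliefTrans M x a y) b b'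
        ∧ IsBadBelief Bad b') → valN M Bad n b = 0 := by
  intro n
  induction n with
  | zero =>
    intro b hb h
    have hnb : ¬ IsBadBelief Bad b := fun hbad => h ⟨b, Relation.ReflTransGen.refl, hbad⟩
    simp [valN, hnb]
  | succ n ih =>
    intro b hb h
    have hnb : ¬ IsBadBelief Bad b := fun hbad => h ⟨b, Relation.ReflTransGen.refl, hbad⟩
    simp only [valN, hnb, if_false]
    have hz : ∀ a : A, ∑ z, obsProb M b a z * valN M Bad n (beliefUpdate M b a z) = 0 := by
      intro a
      refine Finset.sum_eq_zero fun z _ => ?_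
      rcases (obsProb_nonneg M hb.1 a z).eq_or_lt with he | hl
      · rw [← he, zero_mul]
      · rw [ih _ (subDist_update M hb a z) (unreach_update M Bad a z hl h), mul_zero]
    simp only [hz]
    exact ciSup_const

end BellmanAux2

/-- Bellman equation for belief values. For every belief `b` that is
neither a bad belief nor a belief from which bad beliefs are unreachable,
`V(b) = max_α Σ_{b'} P^B(b,α,b')·V(b')` (the sum over successor beliefs written as
the finite sum over observations); moreover `V(b) = 1` for bad beliefs and
`V(b) = 0` when bad beliefs are unreachable from `b`. -/
theorem bellman_equation (M : POMDP S A Z) (Bad : Finset S) [Nonempty A]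
    (b : S → ℝ) (hb : IsBelief M b) :
    (IsBadBelief Bad b → beliefVal M Bad b = 1)
      ∧ ((¬ ∃ b' : S → ℝ,
            Relation.ReflTransGen (fun x y => ∃ a, 0 < beliefTrans M x a y) b b'
              ∧ IsBadBelief Bad b') →
          beliefVal M Bad b = 0)
      ∧ (¬ IsBadBelief Bad b →
          (∃ b' : S → ℝ,
            Relation.ReflTransGen (fun x y => ∃ a, 0 < beliefTrans M x a y) b b'
              ∧ IsBadBelief Bad b') →
          beliefVal M Bad b
            = ⨆ a : A, ∑ z, obsProb M b a z * beliefVal M Bad (beliefUpdate M b a z)) := by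
  have hsd : SubDist b := ⟨hb.1.1, le_of_eq hb.1.2⟩
  refine ⟨?_, ?_, ?_⟩
  · intro hbad
    have h1 : ∀ n, valN M Bad n b = 1 := by
      intro n; cases n <;> simp [valN, hbad]
    unfold beliefVal
    simp only [h1]
    exact ciSup_const
  · intro h
    unfold beliefVal
    have h0 : ∀ n, valN M Bad n b = 0 := fun n => valN_unreach M Bad n b hsd h
    simp only [h0]
    exact ciSup_const
  · intro hnb _
    set f : A → ℕ → ℝ :=
      fun a n => ∑ z, obsProb M b a z * valN M Bad n (beliefUpdate M b a z) with hf
    have hbdd := valN_bddAbove M Bad hsd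
    have hf1 : ∀ a n, f a n ≤ 1 := by
      intro a n
      calc f a n ≤ ∑ z, obsProb M b a z := by
            refine Finset.sum_le_sum fun z _ => ?_
            calc obsProb M b a z * valN M Bad n (beliefUpdate M b a z)
                ≤ obsProb M b a z * 1 :=
                  mul_le_mul_of_nonneg_left
                    (valN_le_one M Bad n _ (subDist_update M hsd a z))
                    (obsProb_nonneg M hsd.1 a z)
              _ = obsProb M b a z := mul_one _
        _ ≤ 1 := sum_obsProb_le_one M hsd a
    have hfmono : ∀ a, Monotone (f a) := by
      intro a
      refine monotone_nat_of_le_succ fun n => ?_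
      refine Finset.sum_le_sum fun z _ => ?_
      exact mul_le_mul_of_nonneg_left
        (valN_mono_succ M Bad n _ (subDist_update M hsd a z))
        (obsProb_nonneg M hsd.1 a z)
    have hfbdd : ∀ a, BddAbove (Set.range (f a)) := by
      intro a
      exact ⟨1, by rintro x ⟨n, rfl⟩; exact hf1 a n⟩
    have hval : ∀ n, valN M Bad (n + 1) b = ⨆ a, f a n := by
      intro n; simp [valN, hnb, hf]
    have hbdd' : BddAbove (Set.range (fun n => valN M Bad (n + 1) b)) :=
      ⟨1, by rintro x ⟨n, rfl⟩; exact valN_le_one M Bad (n + 1) b hsd⟩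
    have hshift : (⨆ n, valN M Bad n b) = ⨆ n, valN M Bad (n + 1) b := by
      apply le_antisymm
      · refine ciSup_le fun n => ?_
        exact le_trans (valN_mono_succ M Bad n b hsd) (le_ciSup hbdd' n)
      · exact ciSup_le fun n => le_ciSup hbdd (n + 1)
    have hbddA : BddAbove (Set.range (fun a => ⨆ n, f a n)) :=
      Set.Finite.bddAbove (Set.finite_range _)
    have hswap : (⨆ n, ⨆ a, f a n) = ⨆ a, ⨆ n, f a n := by
      apply le_antisymm
      · refine ciSup_le fun n => ciSup_le fun a => ?_
        exact le_trans (le_ciSup (hfbdd a) n) (le_ciSup hbddA a)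
      · refine ciSup_le fun a => ciSup_le fun n => ?_
        refine le_trans (le_ciSup (Set.Finite.bddAbove (Set.finite_range (fun a => f a n))) a) ?_
        have hb2 : BddAbove (Set.range fun n => ⨆ a, f a n) := by
          refine ⟨1, ?_⟩
          rintro x ⟨m, rfl⟩
          exact ciSup_le fun a => hf1 a m
        exact le_ciSup hb2 n
    have hlim : ∀ a, (⨆ n, f a n)
        = ∑ z, obsProb M b a z * beliefVal M Bad (beliefUpdate M b a z) := by
      intro a
      have t1 : Filter.Tendsto (f a) Filter.atTop
          (nhds (∑ z, obsProb M b a z *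
            ⨆ n, valN M Bad n (beliefUpdate M b a z))) := by
        refine tendsto_finset_sum _ fun z _ => ?_
        exact (tendsto_atTop_ciSup
          (valN_monotone M Bad (subDist_update M hsd a z))
          (valN_bddAbove M Bad (subDist_update M hsd a z))).const_mul _
      have t2 : Filter.Tendsto (f a) Filter.atTop (nhds (⨆ n, f a n)) :=
        tendsto_atTop_ciSup (hfmono a) (hfbdd a)
      exact tendsto_nhds_unique t2 t1
    calc beliefVal M Bad b = ⨆ n, valN M Bad (n + 1) b := hshift
      _ = ⨆ n, ⨆ a, f a n := by simp only [hval]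
      _ = ⨆ a, ⨆ n, f a n := hswap
      _ = ⨆ a, ∑ z, obsProb M b a z * beliefVal M Bad (beliefUpdate M b a z) := by
            exact iSup_congr hlim
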